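/- Let q ≥ 3 and n ≥ 3q−4. If G is a graph on n vertices with minimum degree δ(G) ≥ q such that for every pair of vertices u, v the induced subgraph on N(u) ∩ N(v) contains a clique on q−2 vertices, then G has at least (q−1)n − C(q,2) edges. -/

import Mathlib

/-!
Let `u` be a vertex of minimum degree `d ≥ q` and `N = N(u)`. If `d ≥ 2q - 2`, the degree sum
alone gives `(q - 1) n` edges. Otherwise split `2 e(G) = Σ_{x ∈ N} d_N(x) + Σ_{y ∉ N} d_N(y) +
Σ_{y ∉ N} deg y`. Every `y ≠ u` has at least `q - 2` neighbours in `N` (a `(q-2)`-clique of the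
common neighbourhood lies there), `u` has `d` of them, and all degrees are at least `d`. Inside `N`
a neighbour `w` of `u` together with a `(q-2)`-clique in `N(u) ∩ N(w)` is a clique `Q` of size
`q - 1`; each of the `d - q + 1` vertices of `N \ Q` has at least `q - 2` neighbours in `N`, at most
`d - q` of them outside `Q`, which forces many edges towards `Q`. With `d = q + k` the resulting
bound exceeds `2 ((q - 1) n - C(q, 2))` by `k (n - 2d + q - 2) ≥ 0`, using `n ≥ 3q - 4`.
-/

open Finset SimpleGraph

namespace SimpleGraph

variable {V : Type*} [Fintype V] (G : SimpleGraph V) [DecidableRel G.Adj]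

lemma card_mul_minDegree_le_two_mul_card_edgeFinset :
    Fintype.card V * G.minDegree ≤ 2 * #G.edgeFinset := by
  rw [← sum_degrees_eq_twice_card_edges, ← smul_eq_mul, ← card_univ, ← sum_const]
  exact sum_le_sum fun v _ => G.minDegree_le_degree v

variable [DecidableEq V]

lemma sum_card_neighborFinset_inter_comm (s t : Finset V) :
    ∑ x ∈ s, #(G.neighborFinset x ∩ t) = ∑ y ∈ t, #(G.neighborFinset y ∩ s) := by
  have h (x : V) (u : Finset V) : G.neighborFinset x ∩ u = {y ∈ u | G.Adj x y} := by
    ext; simp [and_comm]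
  simp_rw [h]
  convert sum_card_bipartiteAbove_eq_sum_card_bipartiteBelow G.Adj using 4 <;>
    ext <;> simp [bipartiteAbove, bipartiteBelow, G.adj_comm]

lemma two_mul_card_edgeFinset_eq_sum_card_neighborFinset_inter (s : Finset V) :
    2 * #G.edgeFinset = ∑ x ∈ s, #(G.neighborFinset x ∩ s) +
      ∑ y ∈ sᶜ, #(G.neighborFinset y ∩ s) + ∑ y ∈ sᶜ, G.degree y := by
  have hdeg (x : V) : G.degree x = #(G.neighborFinset x ∩ s) + #(G.neighborFinset x ∩ sᶜ) := by
    rw [← card_neighborFinset_eq_degree, ← sdiff_eq_inter_compl, card_inter_add_card_sdiff]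
  rw [← sum_degrees_eq_twice_card_edges, ← sum_add_sum_compl s, sum_congr rfl fun x _ => hdeg x,
    sum_add_distrib, G.sum_card_neighborFinset_inter_comm s sᶜ, add_assoc]

lemma sum_card_neighborFinset_inter_add_le_two_mul_card_edgeFinset (u : V) {r : ℕ}
    (hr : ∀ v, v ≠ u → r ≤ #(G.neighborFinset v ∩ G.neighborFinset u)) :
    ∑ x ∈ G.neighborFinset u, #(G.neighborFinset x ∩ G.neighborFinset u) + G.degree u +
      (Fintype.card V - G.degree u - 1) * r + (Fintype.card V - G.degree u) * G.minDegree ≤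
      2 * #G.edgeFinset := by
  have hu : u ∈ (G.neighborFinset u)ᶜ := by simp
  have hcard : #(G.neighborFinset u)ᶜ = Fintype.card V - G.degree u := by
    rw [card_compl, card_neighborFinset_eq_degree]
  have hcompl : G.degree u + (Fintype.card V - G.degree u - 1) * r ≤
      ∑ v ∈ (G.neighborFinset u)ᶜ, #(G.neighborFinset v ∩ G.neighborFinset u) := by
    rw [← add_sum_erase _ _ hu, inter_self, card_neighborFinset_eq_degree, ← hcard,
      ← card_erase_of_mem hu, ← smul_eq_mul, ← sum_const]
    exact Nat.add_le_add_left (sum_le_sum fun v hv => hr v (ne_of_mem_erase hv)) _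
  have hdeg : (Fintype.card V - G.degree u) * G.minDegree ≤
      ∑ v ∈ (G.neighborFinset u)ᶜ, G.degree v := by
    rw [← hcard, ← smul_eq_mul, ← sum_const]
    exact sum_le_sum fun v _ => G.minDegree_le_degree v
  rw [G.two_mul_card_edgeFinset_eq_sum_card_neighborFinset_inter (G.neighborFinset u)]
  omega

variable {G}

lemma Adj.exists_isClique_subset_neighborFinset {u w : V} (huw : G.Adj u w) {S : Finset V}
    (hSadj : ∀ x ∈ S, G.Adj u x ∧ G.Adj w x) (hS : G.IsClique (S : Set V)) :
    ∃ Q ⊆ G.neighborFinset u, G.IsClique (Q : Set V) ∧ #Q = #S + 1 := by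
  refine ⟨insert w S, insert_subset (by simpa) fun x hx => by simpa using (hSadj x hx).1, ?_, ?_⟩
  · rw [coe_insert]
    exact hS.insert fun x hx _ => (hSadj x hx).2
  · exact card_insert_of_notMem fun h => G.irrefl (hSadj w h).2

lemma IsClique.card_neighborFinset_inter {Q : Finset V} (hQ : G.IsClique (Q : Set V)) {x : V}
    (hx : x ∈ Q) : #(G.neighborFinset x ∩ Q) = #Q - 1 := by
  rw [← card_erase_of_mem hx]
  congr 1
  ext y
  simp only [mem_inter, mem_neighborFinset, mem_erase]
  exact ⟨fun h => ⟨h.1.ne', h.2⟩, fun h => ⟨hQ hx h.2 h.1.symm, h.2⟩⟩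

variable (G) in
lemma card_neighborFinset_inter_le {s : Finset V} {x : V} (hx : x ∈ s) :
    #(G.neighborFinset x ∩ s) ≤ #s - 1 := by
  rw [← card_erase_of_mem hx]
  exact card_le_card fun y hy => by
    simp only [mem_inter, mem_neighborFinset] at hy
    exact mem_erase.2 ⟨hy.1.ne', hy.2⟩

lemma IsClique.card_mul_add_le_sum_card_neighborFinset_inter {X Q : Finset V}
    (hQ : G.IsClique (Q : Set V)) (hQX : Q ⊆ X) {r : ℕ}
    (hr : ∀ t ∈ X \ Q, r ≤ #(G.neighborFinset t ∩ X)) :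
    #Q * (#Q - 1) + 2 * r * #(X \ Q) ≤
      ∑ x ∈ X, #(G.neighborFinset x ∩ X) + #(X \ Q) * (#(X \ Q) - 1) := by
  set T := X \ Q
  have hsplit (x : V) :
      #(G.neighborFinset x ∩ X) = #(G.neighborFinset x ∩ Q) + #(G.neighborFinset x ∩ T) := by
    rw [← card_union_of_disjoint (disjoint_sdiff.mono inter_subset_right inter_subset_right),
      ← inter_union_distrib_left, union_sdiff_of_subset hQX]
  have hQsum : ∑ x ∈ Q, #(G.neighborFinset x ∩ X) =
      #Q * (#Q - 1) + ∑ t ∈ T, #(G.neighborFinset t ∩ Q) := by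
    rw [sum_congr rfl fun x hx => by rw [hsplit, hQ.card_neighborFinset_inter hx], sum_add_distrib,
      sum_const, smul_eq_mul, G.sum_card_neighborFinset_inter_comm]
  have hTsum : ∑ t ∈ T, 2 * r ≤
      ∑ t ∈ T, (2 * #(G.neighborFinset t ∩ Q) + #(G.neighborFinset t ∩ T) + (#T - 1)) := by
    refine sum_le_sum fun t ht => ?_
    have hrt := hr t ht
    have hT := G.card_neighborFinset_inter_le ht
    rw [hsplit] at hrt
    omega
  rw [← sum_sdiff hQX, hQsum]
  simp only [hsplit, sum_add_distrib, ← mul_sum, sum_const, smul_eq_mul] at hTsum ⊢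
  linarith

end SimpleGraph

lemma mul_sub_choose_two_le {q n d s m : ℕ} (hq : 3 ≤ q) (hn : 3 * q - 4 ≤ n) (hqd : q ≤ d)
    (hdn : d < n) (hsum : n * d ≤ 2 * m)
    (hs : (q - 1) * (q - 1 - 1) + 2 * (q - 2) * (d - (q - 1)) ≤
      s + (d - (q - 1)) * (d - (q - 1) - 1))
    (hm : s + d + (n - d - 1) * (q - 2) + (n - d) * d ≤ 2 * m) :
    (q - 1) * n - q.choose 2 ≤ m := by
  have hchoose : 2 * q.choose 2 = q * (q - 1) := by
    rw [Nat.choose_two_right, Nat.mul_div_cancel' (Nat.even_mul_pred_self q).two_dvd]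
  suffices 2 * ((q - 1) * n) ≤ 2 * m + q * (q - 1) by omega
  rcases le_or_gt (2 * (q - 1)) d with hd | hd
  · calc 2 * ((q - 1) * n) = n * (2 * (q - 1)) := by ring
      _ ≤ n * d := Nat.mul_le_mul_left n hd
      _ ≤ _ := hsum.trans (Nat.le_add_right _ _)
  obtain ⟨j, rfl⟩ : ∃ j, q = j + 3 := ⟨q - 3, by omega⟩
  obtain ⟨k, rfl⟩ : ∃ k, d = j + k + 3 := ⟨d - (j + 3), by omega⟩
  obtain ⟨b, rfl⟩ : ∃ b, n = b + j + 2 * k + 5 := ⟨n - (j + 2 * k + 5), by omega⟩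
  simp only [show j + 3 - 1 = j + 2 by omega, show j + 3 - 2 = j + 1 by omega,
    show j + 2 - 1 = j + 1 by omega, show j + k + 3 - (j + 2) = k + 1 by omega,
    show b + j + 2 * k + 5 - (j + k + 3) = b + k + 2 by omega,
    show b + k + 2 - 1 = b + k + 1 by omega, Nat.add_sub_cancel] at hs hm ⊢
  -- the slack is exactly `k * b`
  nlinarith [Nat.zero_le (k * b)]

/-- Let `q ≥ 3`, `n ≥ 3q - 4`. If `G` is a graph on `n` vertices with minimum
degree at least `q` such that the common neighborhood of every pair of vertices
contains a clique on `q-2` vertices, then `G` has at least `(q-1)n - C(q,2)`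
edges. -/
theorem stmt11 (q n : ℕ) (hq : 3 ≤ q) (hn : 3 * q - 4 ≤ n)
    (G : SimpleGraph (Fin n)) [DecidableRel G.Adj]
    (hmindeg : q ≤ G.minDegree)
    (hclique : ∀ u v : Fin n, u ≠ v →
      ∃ S : Finset (Fin n), S.card = q - 2 ∧
        (∀ w ∈ S, G.Adj u w ∧ G.Adj v w) ∧
        (∀ w ∈ S, ∀ w' ∈ S, w ≠ w' → G.Adj w w')) :
    (q - 1) * n - q.choose 2 ≤ G.edgeFinset.card := by
  have : Nonempty (Fin n) := ⟨⟨0, by omega⟩⟩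
  obtain ⟨u, hu⟩ := G.exists_minimal_degree_vertex
  have hcommon (v : Fin n) (hv : v ≠ u) : q - 2 ≤ #(G.neighborFinset v ∩ G.neighborFinset u) := by
    obtain ⟨S, hS, hSadj, -⟩ := hclique v u hv
    exact hS ▸ card_le_card fun w hw => by simpa using hSadj w hw
  obtain ⟨w, hw⟩ : (G.neighborFinset u).Nonempty := by
    rw [← card_pos, card_neighborFinset_eq_degree, ← hu]; omega
  rw [mem_neighborFinset] at hw
  obtain ⟨S, hS, hSadj, hSclique⟩ := hclique u w hw.ne
  obtain ⟨Q, hQN, hQ, hQcard⟩ :=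
    hw.exists_isClique_subset_neighborFinset hSadj fun x hx y hy => hSclique x hx y hy
  rw [hS, show q - 2 + 1 = q - 1 by omega] at hQcard
  have hN := hQ.card_mul_add_le_sum_card_neighborFinset_inter hQN fun t ht =>
    hcommon t ((mem_neighborFinset ..).1 (mem_sdiff.1 ht).1).ne'
  have hE := G.sum_card_neighborFinset_inter_add_le_two_mul_card_edgeFinset u hcommon
  have hsum := G.card_mul_minDegree_le_two_mul_card_edgeFinset
  have hdn := G.minDegree_lt_card
  rw [card_sdiff_of_subset hQN, hQcard, card_neighborFinset_eq_degree, ← hu] at hN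
  rw [Fintype.card_fin, ← hu] at hE
  rw [Fintype.card_fin] at hsum hdn
  exact mul_sub_choose_two_le hq hn hmindeg hdn hsum hN hE
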